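/- Let H₁, H₂, H₃ be graphs and p₁,p₂,p₃ ∈ (0,1) with p₁+p₂+p₃=1. If min{g(H₁), g(H₂), g(H₃)} is odd (and finite), then (H₁,H₂,H₃) is not (p₁,p₂,p₃)-common. -/

import Mathlib

/-!
Perturb the constant graphons `pᵢ` along the `±1` kernel `B x y = -(halfSign x * halfSign y)`,
where `halfSign` is `1` on `[0, 1/2)` and `-1` on `[1/2, 1]`. Expanding the product over the edges
of `H` and integrating gives `t(H, p + εB) = ∑_F (-ε)^|F| p^(e(H) - |F|)`, summed over the edge sets
`F ⊆ E(H)` in which every vertex has even degree. A nonempty such `F` contains a cycle, so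
`|F| ≥ g(H)`, and the edge sets of the shortest cycles have `|F| = g(H)`. Hence, with `k` the
minimum girth, the normalized excess of `Hᵢ` at `Wᵢ = pᵢ + c sᵢ B` is `cᵏ ((-sᵢ)ᵏ aᵢ + O(c))`
with `aᵢ ≥ 0`, and `aᵢ > 0` when `g(Hᵢ) = k`. The `Wᵢ` still sum to `1` when `∑ sᵢ = 0`; since
`k` is odd, one of the cyclic shifts of `s = (2, -1, -1)` makes `∑ (-sᵢ)ᵏ aᵢ` negative, and then
so is the total excess for small `c > 0`.
-/

open MeasureTheory Finset

noncomputable def unitM : Measure ℝ := volume.restrict (Set.Icc 0 1)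

instance : SigmaFinite unitM := by unfold unitM; infer_instance

noncomputable def symEdge {α : Type*} (W : ℝ → ℝ → ℝ) (x : α → ℝ) : Sym2 α → ℝ :=
  Sym2.lift ⟨fun u v => (W (x u) (x v) + W (x v) (x u)) / 2, fun u v => by ring⟩

open Classical in
noncomputable def homDensity {V : Type*} [Fintype V] (G : SimpleGraph V)
    (W : ℝ → ℝ → ℝ) : ℝ :=
  ∫ x : V → ℝ, ∏ e ∈ G.edgeFinset, symEdge W x e ∂(Measure.pi fun _ => unitM)

noncomputable def eCount {V : Type*} (G : SimpleGraph V) : ℕ := G.edgeSet.ncard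

def IsSymm2 (W : ℝ → ℝ → ℝ) : Prop := ∀ x y, W x y = W y x

def IsKernel (W : ℝ → ℝ → ℝ) : Prop :=
  Measurable (Function.uncurry W) ∧ IsSymm2 W ∧ ∃ C, ∀ x y, |W x y| ≤ C

def IsGraphon (W : ℝ → ℝ → ℝ) : Prop :=
  Measurable (Function.uncurry W) ∧ IsSymm2 W ∧ ∀ x y, W x y ∈ Set.Icc (0:ℝ) 1

def IsCommonPair {V₁ V₂ : Type*} [Fintype V₁] [Fintype V₂]
    (G₁ : SimpleGraph V₁) (G₂ : SimpleGraph V₂) (p₁ p₂ : ℝ) : Prop :=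
  ∀ W₁ W₂ : ℝ → ℝ → ℝ, IsGraphon W₁ → IsGraphon W₂ → (∀ x y, W₁ x y + W₂ x y = 1) →
    homDensity G₁ W₁ / (eCount G₁ * p₁ ^ (eCount G₁ - 1))
      + homDensity G₂ W₂ / (eCount G₂ * p₂ ^ (eCount G₂ - 1))
      ≥ p₁ / eCount G₁ + p₂ / eCount G₂

def IsCommonTriple {V₁ V₂ V₃ : Type*} [Fintype V₁] [Fintype V₂] [Fintype V₃]
    (G₁ : SimpleGraph V₁) (G₂ : SimpleGraph V₂) (G₃ : SimpleGraph V₃)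
    (p₁ p₂ p₃ : ℝ) : Prop :=
  ∀ W₁ W₂ W₃ : ℝ → ℝ → ℝ, IsGraphon W₁ → IsGraphon W₂ → IsGraphon W₃ →
    (∀ x y, W₁ x y + W₂ x y + W₃ x y = 1) →
    homDensity G₁ W₁ / (eCount G₁ * p₁ ^ (eCount G₁ - 1))
      + homDensity G₂ W₂ / (eCount G₂ * p₂ ^ (eCount G₂ - 1))
      + homDensity G₃ W₃ / (eCount G₃ * p₃ ^ (eCount G₃ - 1))
      ≥ p₁ / eCount G₁ + p₂ / eCount G₂ + p₃ / eCount G₃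

open Classical Filter Topology

section SignKernel

instance : IsProbabilityMeasure unitM := ⟨by simp [unitM, Real.volume_Icc]⟩

noncomputable def halfSign (x : ℝ) : ℝ := if x < 1 / 2 then 1 else -1

lemma measurable_halfSign : Measurable halfSign :=
  Measurable.ite measurableSet_Iio measurable_const measurable_const

lemma abs_halfSign (x : ℝ) : |halfSign x| = 1 := by
  unfold halfSign; split_ifs <;> simp

lemma integral_halfSign : ∫ x, halfSign x ∂unitM = 0 := by
  have hsplit : halfSign = (Set.Iio (1 / 2 : ℝ)).piecewise (fun _ => 1) (fun _ => -1) := by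
    ext x; simp [halfSign, Set.piecewise]
  have hlow : unitM.real (Set.Iio (1 / 2)) = 1 / 2 := by
    have : Set.Iio (1 / 2 : ℝ) ∩ Set.Icc 0 1 = Set.Ico 0 (1 / 2) := by
      ext x; simp only [Set.mem_inter_iff, Set.mem_Iio, Set.mem_Icc, Set.mem_Ico]; grind
    rw [measureReal_def, unitM, Measure.restrict_apply measurableSet_Iio, this]
    norm_num [Real.volume_Ico]
  have hhigh : unitM.real (Set.Iio (1 / 2))ᶜ = 1 / 2 := by
    rw [probReal_compl_eq_one_sub measurableSet_Iio, hlow]; norm_num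
  rw [hsplit, integral_piecewise measurableSet_Iio (integrable_const _).integrableOn
    (integrable_const _).integrableOn, setIntegral_const, setIntegral_const, hlow, hhigh]
  norm_num

lemma integral_halfSign_pow (d : ℕ) :
    ∫ x, halfSign x ^ d ∂unitM = if Even d then 1 else 0 := by
  rcases Nat.even_or_odd d with hd | hd
  · simp [hd, ← hd.pow_abs, abs_halfSign]
  · have hpow : ∀ x, halfSign x ^ d = halfSign x := fun x => by
      unfold halfSign; split_ifs <;> simp [hd.neg_one_pow]
    simp [hpow, integral_halfSign, Nat.not_even_iff_odd.2 hd]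

variable {V : Type*} [Fintype V]

lemma integrable_prod_halfSign_pow (d : V → ℕ) :
    Integrable (fun x : V → ℝ => ∏ v, halfSign (x v) ^ d v) (Measure.pi fun _ => unitM) := by
  refine .of_bound (Finset.measurable_prod _ fun v _ =>
    (measurable_halfSign.comp (measurable_pi_apply v)).pow_const _).aestronglyMeasurable 1
    (.of_forall fun x => ?_)
  simp [abs_halfSign]

lemma integral_prod_halfSign_pow (d : V → ℕ) :
    ∫ x : V → ℝ, ∏ v, halfSign (x v) ^ d v ∂(Measure.pi fun _ => unitM)
      = if ∀ v, Even (d v) then 1 else 0 := by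
  rw [integral_fintype_prod_eq_prod (fun v y => halfSign y ^ d v)]
  simp_rw [integral_halfSign_pow, Fintype.prod_boole]

noncomputable def signKernel (x y : ℝ) : ℝ := -(halfSign x * halfSign y)

end SignKernel

section EvenEdgeSets

variable {V : Type*} [Fintype V]

def IsEvenEdgeSet (t : Finset (Sym2 V)) : Prop := ∀ v, Even #{e ∈ t | v ∈ e}

theorem prod_prod_filter_mem_eq_prod_pow {M : Type*} [CommMonoid M] (t : Finset (Sym2 V))
    (f : V → M) : ∏ e ∈ t, ∏ v with v ∈ e, f v = ∏ v, f v ^ #{e ∈ t | v ∈ e} := by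
  simp_rw [Finset.prod_filter]
  rw [Finset.prod_comm]
  simp_rw [← Finset.prod_filter, Finset.prod_const]

lemma symEdge_const_add_mul {α : Type*} (p ε : ℝ) (W : ℝ → ℝ → ℝ) (x : α → ℝ) (e : Sym2 α) :
    symEdge (fun a b => p + ε * W a b) x e = p + ε * symEdge W x e := by
  induction e using Sym2.ind with
  | _ u v => simp only [symEdge, Sym2.lift_mk]; ring

lemma symEdge_signKernel (x : V → ℝ) {e : Sym2 V} (he : ¬e.IsDiag) :
    symEdge signKernel x e = -∏ v with v ∈ e, halfSign (x v) := by
  induction e using Sym2.ind with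
  | _ u w =>
    have huw : u ≠ w := by simpa using he
    have hmem : ({v | v ∈ s(u, w)} : Finset V) = {u, w} := by ext; simp
    rw [hmem, Finset.prod_pair huw]
    simp only [symEdge, Sym2.lift_mk, signKernel]
    ring

lemma prod_symEdge_signKernel (x : V → ℝ) {t : Finset (Sym2 V)} (ht : ∀ e ∈ t, ¬e.IsDiag) :
    ∏ e ∈ t, symEdge signKernel x e = (-1) ^ #t * ∏ v, halfSign (x v) ^ #{e ∈ t | v ∈ e} := by
  rw [Finset.prod_congr rfl fun e he => symEdge_signKernel x (ht e he), Finset.prod_neg,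
    prod_prod_filter_mem_eq_prod_pow]

theorem homDensity_const_add_mul_signKernel (G : SimpleGraph V) (p ε : ℝ) :
    homDensity G (fun x y => p + ε * signKernel x y)
      = ∑ t ∈ G.edgeFinset.powerset with IsEvenEdgeSet t,
          (-ε) ^ #t * p ^ (#G.edgeFinset - #t) := by
  have hexpand : ∀ x : V → ℝ,
      ∏ e ∈ G.edgeFinset, symEdge (fun a b => p + ε * signKernel a b) x e
        = ∑ t ∈ G.edgeFinset.powerset, (-ε) ^ #t * p ^ (#G.edgeFinset - #t)
            * ∏ v, halfSign (x v) ^ #{e ∈ t | v ∈ e} := fun x => by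
    simp_rw [symEdge_const_add_mul, add_comm p, Finset.prod_add]
    refine Finset.sum_congr rfl fun t ht => ?_
    have htE := Finset.mem_powerset.1 ht
    have hdiag : ∀ e ∈ t, ¬e.IsDiag := fun e he =>
      G.not_isDiag_of_mem_edgeSet (SimpleGraph.mem_edgeFinset.1 (htE he))
    rw [Finset.prod_mul_distrib, prod_symEdge_signKernel x hdiag, Finset.prod_const,
      Finset.prod_const, Finset.card_sdiff_of_subset htE, neg_pow]
    ring
  rw [homDensity, integral_congr_ae (.of_forall hexpand),
    integral_finsetSum _ fun t _ => (integrable_prod_halfSign_pow _).const_mul _]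
  simp_rw [integral_const_mul, integral_prod_halfSign_pow, mul_ite, mul_one, mul_zero,
    Finset.sum_filter]
  exact Finset.sum_congr rfl fun t _ => by congr

end EvenEdgeSets

namespace SimpleGraph

variable {V : Type*} {G : SimpleGraph V}

theorem Walk.IsCycle.isEvenEdgeSet_edgesFinset {a : V} {c : G.Walk a a} (hc : c.IsCycle) :
    IsEvenEdgeSet hc.isCircuit.isTrail.edgesFinset := fun v => by
  have := (hc.isCircuit.isTrail.even_countP_edges_iff v).2 (absurd rfl)
  rwa [← Multiset.coe_countP, Multiset.countP_eq_card_filter] at this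

variable [Fintype V]

theorem IsAcyclic.exists_degree_eq_one [DecidableRel G.Adj] (hG : G.IsAcyclic) {a b : V}
    (hab : G.Adj a b) : ∃ v, G.degree v = 1 := by
  -- the first vertex of a longest path is a leaf
  have : Nonempty V := ⟨a⟩
  obtain ⟨u, v, p, hp, hlongest⟩ := Walk.exists_isPath_forall_isPath_length_le_length G
  have hnil : ¬p.Nil := fun h => by
    simpa [h.length_eq_zero] using hlongest _ _ _ (Walk.IsPath.nil.cons (by simpa using hab.ne) :
      (Walk.cons hab .nil).IsPath)
  refine ⟨u, degree_eq_one_iff_existsUnique_adj.2 ⟨p.snd, p.adj_snd hnil, fun w hw => ?_⟩⟩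
  refine hG.eq_snd_of_adj_start hp hw (by_contra fun hwp => ?_)
  simpa using hlongest _ _ _ (hp.cons hwp : (Walk.cons hw.symm p).IsPath)

theorem le_card_of_isEvenEdgeSet {k : ℕ} (hk : (k : ℕ∞) ≤ G.egirth) {t : Finset (Sym2 V)}
    (htG : t ⊆ G.edgeFinset) (hne : t.Nonempty) (heven : IsEvenEdgeSet t) : k ≤ #t := by
  -- the graph with edge set `t` has no vertex of degree one, so it contains a cycle
  set H := fromEdgeSet (t : Set (Sym2 V))
  have hHt : H.edgeFinset = t := by
    ext e
    simp only [H, mem_edgeFinset, edgeSet_fromEdgeSet, Set.mem_sdiff, Finset.mem_coe,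
      Sym2.mem_diagSet, and_iff_left_iff_imp]
    exact fun he => G.not_isDiag_of_mem_edgeSet (mem_edgeFinset.1 (htG he))
  have hHG : H ≤ G := by
    rw [← edgeFinset_subset_edgeFinset, hHt]; exact htG
  have hcyclic : ¬H.IsAcyclic := fun hH => by
    obtain ⟨e, he⟩ := hne
    induction e using Sym2.ind with
    | _ a b =>
      have hab : H.Adj a b := by rw [← mem_edgeSet, ← mem_edgeFinset, hHt]; exact he
      obtain ⟨v, hv⟩ := hH.exists_degree_eq_one hab
      have := heven v
      rw [← hHt, ← incidenceFinset_eq_filter, card_incidenceFinset_eq_degree, hv] at this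
      exact Nat.not_even_one this
  obtain ⟨a, c, hc, hlen⟩ := exists_egirth_eq_length.2 hcyclic
  have : (k : ℕ∞) ≤ c.length := hlen ▸ hk.trans (egirth_anti hHG)
  exact (Nat.cast_le.1 this).trans (hHt ▸ hc.isCircuit.isTrail.length_le_card_edgeFinset)

end SimpleGraph

section Excess

variable {V : Type*} [Fintype V] (G : SimpleGraph V)

-- `IsCommonTriple G₁ G₂ G₃ p₁ p₂ p₃` says that the three normalized excesses have sum `≥ 0`.
noncomputable def normalizedExcess (p : ℝ) (W : ℝ → ℝ → ℝ) : ℝ :=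
  homDensity G W / (eCount G * p ^ (eCount G - 1)) - p / eCount G

noncomputable def evenSubgraphs : Finset (Finset (Sym2 V)) :=
  {t ∈ G.edgeFinset.powerset | IsEvenEdgeSet t}.erase ∅

noncomputable def excessLeadingCoeff (p : ℝ) (k : ℕ) : ℝ :=
  #{t ∈ evenSubgraphs G | #t = k} * p ^ (#G.edgeFinset - k)
    / (#G.edgeFinset * p ^ (#G.edgeFinset - 1))

lemma eCount_eq_card_edgeFinset : eCount G = #G.edgeFinset := by
  rw [eCount, SimpleGraph.edgeFinset, Set.ncard_eq_toFinset_card']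

lemma pow_div_natCast_mul_pow_sub_one {p : ℝ} (hp : p ≠ 0) (m : ℕ) :
    p ^ m / (m * p ^ (m - 1)) = p / m := by
  cases m with
  | zero => simp
  | succ m => rw [Nat.add_sub_cancel, pow_succ']; field_simp

theorem normalizedExcess_const_add_mul_signKernel {p : ℝ} (hp : p ≠ 0) (ε : ℝ) :
    normalizedExcess G p (fun x y => p + ε * signKernel x y)
      = ∑ t ∈ evenSubgraphs G, (-ε) ^ #t * p ^ (#G.edgeFinset - #t)
          / (#G.edgeFinset * p ^ (#G.edgeFinset - 1)) := by
  have hempty : ∅ ∈ {t ∈ G.edgeFinset.powerset | IsEvenEdgeSet t} :=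
    Finset.mem_filter.2 ⟨Finset.empty_mem_powerset _, fun v => by simp⟩
  rw [normalizedExcess, homDensity_const_add_mul_signKernel, eCount_eq_card_edgeFinset,
    ← Finset.add_sum_erase _ _ hempty, add_div, Finset.sum_div, evenSubgraphs]
  simp [pow_div_natCast_mul_pow_sub_one hp]

variable {G}

lemma mem_evenSubgraphs {t : Finset (Sym2 V)} :
    t ∈ evenSubgraphs G ↔ t.Nonempty ∧ t ⊆ G.edgeFinset ∧ IsEvenEdgeSet t := by
  simp [evenSubgraphs, Finset.nonempty_iff_ne_empty]

theorem tendsto_normalizedExcess_div_pow {p : ℝ} (hp : p ≠ 0) {k : ℕ} (hk : (k : ℕ∞) ≤ G.egirth)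
    (s : ℝ) :
    Tendsto (fun c => normalizedExcess G p (fun x y => p + c * s * signKernel x y) / c ^ k)
      (𝓝[≠] 0) (𝓝 ((-s) ^ k * excessLeadingCoeff G p k)) := by
  have hcard : ∀ t ∈ evenSubgraphs G, k ≤ #t := fun t ht => by
    obtain ⟨hne, htG, heven⟩ := mem_evenSubgraphs.1 ht
    exact SimpleGraph.le_card_of_isEvenEdgeSet hk htG hne heven
  -- dividing by `c ^ k` leaves a polynomial, since every even subgraph has at least `k` edges
  set f : ℝ → ℝ := fun c => ∑ t ∈ evenSubgraphs G, c ^ (#t - k) *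
    ((-s) ^ #t * p ^ (#G.edgeFinset - #t) / (#G.edgeFinset * p ^ (#G.edgeFinset - 1)))
  have hf : f 0 = (-s) ^ k * excessLeadingCoeff G p k := by
    have hterm : ∀ t ∈ evenSubgraphs G, (0 : ℝ) ^ (#t - k) *
        ((-s) ^ #t * p ^ (#G.edgeFinset - #t) / (#G.edgeFinset * p ^ (#G.edgeFinset - 1)))
        = if #t = k then (-s) ^ k * p ^ (#G.edgeFinset - k)
            / (#G.edgeFinset * p ^ (#G.edgeFinset - 1)) else 0 := fun t ht => by
      have := hcard t ht
      split_ifs with htk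
      · simp [htk]
      · rw [zero_pow (by omega), zero_mul]
    simp only [f]
    rw [Finset.sum_congr rfl hterm, ← Finset.sum_filter, Finset.sum_const, nsmul_eq_mul,
      excessLeadingCoeff]
    ring
  have heq : ∀ c ≠ 0,
      normalizedExcess G p (fun x y => p + c * s * signKernel x y) / c ^ k = f c := fun c hc => by
    rw [normalizedExcess_const_add_mul_signKernel G hp, Finset.sum_div]
    refine Finset.sum_congr rfl fun t ht => ?_
    obtain ⟨j, hj⟩ := Nat.exists_eq_add_of_le (hcard t ht)
    rw [hj, Nat.add_sub_cancel_left, show -(c * s) = c * -s by ring, mul_pow, pow_add]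
    field_simp
  have hcont : Continuous f := continuous_finsetSum _ fun t _ => by fun_prop
  rw [← hf]
  refine ((hcont.tendsto 0).mono_left nhdsWithin_le_nhds).congr' ?_
  filter_upwards [self_mem_nhdsWithin] with c hc using (heq c hc).symm

lemma excessLeadingCoeff_nonneg {p : ℝ} (hp : 0 ≤ p) (k : ℕ) : 0 ≤ excessLeadingCoeff G p k := by
  unfold excessLeadingCoeff; positivity

theorem excessLeadingCoeff_pos {p : ℝ} (hp : 0 < p) {k : ℕ} (hk : G.egirth = k) :
    0 < excessLeadingCoeff G p k := by
  have hcyclic : ¬G.IsAcyclic := fun h => by simp [h.egirth_eq_top] at hk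
  obtain ⟨a, c, hc, hlen⟩ := SimpleGraph.exists_egirth_eq_length.2 hcyclic
  set t := hc.isCircuit.isTrail.edgesFinset
  have hct : #t = c.length := by
    rw [← c.length_edges]; rfl
  have htk : #t = k := by rw [hct]; exact_mod_cast (hk ▸ hlen).symm
  have htG : t ⊆ G.edgeFinset := fun e he =>
    SimpleGraph.mem_edgeFinset.2 (c.edges_subset_edgeSet he)
  have hne : t.Nonempty := Finset.card_pos.1 (by have := hc.three_le_length; omega)
  have ht : t ∈ evenSubgraphs G := mem_evenSubgraphs.2 ⟨hne, htG, hc.isEvenEdgeSet_edgesFinset⟩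
  have hE : 0 < #G.edgeFinset := Finset.card_pos.2 (hne.mono htG)
  have hN : 0 < #{t ∈ evenSubgraphs G | #t = k} := Finset.card_pos.2 ⟨t, by simp [ht, htk]⟩
  unfold excessLeadingCoeff; positivity

end Excess

lemma isGraphon_const_add_mul_signKernel {p ε : ℝ} (h₀ : |ε| ≤ p) (h₁ : |ε| ≤ 1 - p) :
    IsGraphon (fun x y => p + ε * signKernel x y) := by
  refine ⟨?_, fun x y => by simp only [signKernel]; ring, fun x y => ?_⟩
  · have := measurable_halfSign
    unfold signKernel; fun_prop
  · have hB : |signKernel x y| = 1 := by simp [signKernel, abs_halfSign]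
    have := abs_le.1 ((abs_mul ε _).trans_le (by rw [hB, mul_one]))
    constructor <;> linarith [this.1, this.2]

lemma eventually_isGraphon_const_add_mul_signKernel {p : ℝ} (hp : p ∈ Set.Ioo 0 1) (s : ℝ) :
    ∀ᶠ c in 𝓝 0, IsGraphon (fun x y => p + c * s * signKernel x y) := by
  have hsmall : ∀ᶠ c : ℝ in 𝓝 0, |c * s| < min p (1 - p) :=
    ContinuousAt.eventually_lt (by fun_prop) continuousAt_const
      (by simpa using lt_min hp.1 (sub_pos.2 hp.2))
  filter_upwards [hsmall] with c hc
  exact isGraphon_const_add_mul_signKernel (hc.le.trans (min_le_left _ _))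
    (hc.le.trans (min_le_right _ _))

theorem not_isCommonTriple_of_excessLeadingCoeff {V₁ V₂ V₃ : Type*}
    [Fintype V₁] [Fintype V₂] [Fintype V₃]
    {G₁ : SimpleGraph V₁} {G₂ : SimpleGraph V₂} {G₃ : SimpleGraph V₃} {p₁ p₂ p₃ : ℝ}
    (hp₁ : p₁ ∈ Set.Ioo 0 1) (hp₂ : p₂ ∈ Set.Ioo 0 1) (hp₃ : p₃ ∈ Set.Ioo 0 1)
    (hsum : p₁ + p₂ + p₃ = 1) {k : ℕ} (hk₁ : (k : ℕ∞) ≤ G₁.egirth)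
    (hk₂ : (k : ℕ∞) ≤ G₂.egirth) (hk₃ : (k : ℕ∞) ≤ G₃.egirth) {s₁ s₂ s₃ : ℝ}
    (hs : s₁ + s₂ + s₃ = 0)
    (hneg : (-s₁) ^ k * excessLeadingCoeff G₁ p₁ k + (-s₂) ^ k * excessLeadingCoeff G₂ p₂ k
      + (-s₃) ^ k * excessLeadingCoeff G₃ p₃ k < 0) :
    ¬IsCommonTriple G₁ G₂ G₃ p₁ p₂ p₃ := by
  intro hcommon
  have hlim := ((tendsto_normalizedExcess_div_pow hp₁.1.ne' hk₁ s₁).add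
    (tendsto_normalizedExcess_div_pow hp₂.1.ne' hk₂ s₂)).add
    (tendsto_normalizedExcess_div_pow hp₃.1.ne' hk₃ s₃)
  have hsmall := (hlim.eventually_lt_const hneg).filter_mono (nhdsGT_le_nhdsNE 0)
  have hgraphon := (eventually_isGraphon_const_add_mul_signKernel hp₁ s₁).and
    ((eventually_isGraphon_const_add_mul_signKernel hp₂ s₂).and
      (eventually_isGraphon_const_add_mul_signKernel hp₃ s₃))
  obtain ⟨c, hc, hexcess, hW₁, hW₂, hW₃⟩ :=
    (eventually_mem_nhdsWithin.and (hsmall.and (hgraphon.filter_mono nhdsWithin_le_nhds))).exists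
  have hcover : ∀ x y, (p₁ + c * s₁ * signKernel x y) + (p₂ + c * s₂ * signKernel x y)
      + (p₃ + c * s₃ * signKernel x y) = 1 := fun x y => by
    linear_combination hsum + c * signKernel x y * hs
  have hcommon := hcommon _ _ _ hW₁ hW₂ hW₃ hcover
  rw [← add_div, ← add_div, div_lt_iff₀ (pow_pos hc k), zero_mul] at hexcess
  simp only [normalizedExcess] at hexcess
  linarith

lemma exists_sum_eq_zero_neg_pow_mul_lt_zero {k : ℕ} (hk : Odd k) (hk₂ : 2 ≤ k) {a₁ a₂ a₃ : ℝ}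
    (ha₁ : 0 ≤ a₁) (ha₂ : 0 ≤ a₂) (ha₃ : 0 ≤ a₃) (ha : 0 < a₁ + a₂ + a₃) :
    ∃ s₁ s₂ s₃ : ℝ, s₁ + s₂ + s₃ = 0 ∧ (-s₁) ^ k * a₁ + (-s₂) ^ k * a₂ + (-s₃) ^ k * a₃ < 0 := by
  have h4 : (4 : ℝ) ≤ 2 ^ k := by
    calc (4 : ℝ) = 2 ^ 2 := by norm_num
      _ ≤ 2 ^ k := pow_le_pow_right₀ one_le_two hk₂
  by_contra! h
  -- summing over the three cyclic shifts of `(2, -1, -1)` gives `(2 - 2 ^ k) (a₁ + a₂ + a₃)`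
  have e₁ := h 2 (-1) (-1) (by norm_num)
  have e₂ := h (-1) 2 (-1) (by norm_num)
  have e₃ := h (-1) (-1) 2 (by norm_num)
  simp only [neg_neg, one_pow, one_mul, hk.neg_pow] at e₁ e₂ e₃
  nlinarith

/-- If the minimum girth of `H₁, H₂, H₃` is odd (and finite), then `(H₁,H₂,H₃)`
is not `(p₁,p₂,p₃)`-common for any `p₁,p₂,p₃ ∈ (0,1)` with `p₁+p₂+p₃=1`. -/
theorem oddGirth_triple_not_common {V₁ V₂ V₃ : Type*}
    [Fintype V₁] [Fintype V₂] [Fintype V₃]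
    (G₁ : SimpleGraph V₁) (G₂ : SimpleGraph V₂) (G₃ : SimpleGraph V₃)
    (p₁ p₂ p₃ : ℝ) (hp₁ : p₁ ∈ Set.Ioo (0:ℝ) 1) (hp₂ : p₂ ∈ Set.Ioo (0:ℝ) 1)
    (hp₃ : p₃ ∈ Set.Ioo (0:ℝ) 1) (hsum : p₁ + p₂ + p₃ = 1)
    (k : ℕ) (hodd : Odd k)
    (hg : min (min G₁.egirth G₂.egirth) G₃.egirth = (k : ℕ∞)) :
    ¬ IsCommonTriple G₁ G₂ G₃ p₁ p₂ p₃ := by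
  have hk₁ : (k : ℕ∞) ≤ G₁.egirth := hg ▸ (min_le_left _ _).trans (min_le_left _ _)
  have hk₂ : (k : ℕ∞) ≤ G₂.egirth := hg ▸ (min_le_left _ _).trans (min_le_right _ _)
  have hk₃ : (k : ℕ∞) ≤ G₃.egirth := hg ▸ min_le_right _ _
  have hk : 3 ≤ k := by
    have := hg ▸ le_min (le_min G₁.three_le_egirth G₂.three_le_egirth) G₃.three_le_egirth
    exact_mod_cast this
  have ha₁ := excessLeadingCoeff_nonneg (G := G₁) hp₁.1.le k
  have ha₂ := excessLeadingCoeff_nonneg (G := G₂) hp₂.1.le k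
  have ha₃ := excessLeadingCoeff_nonneg (G := G₃) hp₃.1.le k
  have ha : 0 < excessLeadingCoeff G₁ p₁ k + excessLeadingCoeff G₂ p₂ k
      + excessLeadingCoeff G₃ p₃ k := by
    rcases min_choice (min G₁.egirth G₂.egirth) G₃.egirth with h | h <;> rw [h] at hg
    · rcases min_choice G₁.egirth G₂.egirth with h | h <;> rw [h] at hg
      · linarith [excessLeadingCoeff_pos hp₁.1 hg]
      · linarith [excessLeadingCoeff_pos hp₂.1 hg]
    · linarith [excessLeadingCoeff_pos hp₃.1 hg]
  obtain ⟨s₁, s₂, s₃, hs, hneg⟩ :=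
    exists_sum_eq_zero_neg_pow_mul_lt_zero hodd (by omega) ha₁ ha₂ ha₃ ha
  exact not_isCommonTriple_of_excessLeadingCoeff hp₁ hp₂ hp₃ hsum hk₁ hk₂ hk₃ hs hneg
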